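/- arXiv:2203.00735 — 6 statements merged into one kernel-verified Lean document; each statement's English description precedes it below -/
import Mathlib

section
/- A vector y ∈ [1, m]^m lies in the permutahedron, i.e., the convex hull of the vectors (π(1), ..., π(m)) over all permutations π of [m], if and only if the sum of all coordinates of y equals binomial(m+1, 2) and for every nonempty subset S of [m], the sum of the coordinates of y indexed by S is at most binomial(m+1, 2) − binomial(m+1−|S|, 2). -/
/-!
Each constraint is a linear inequality satisfied by every permutation vector (any `k` distinct
values among `1, …, m` sum to at least `1 + ⋯ + k = C(k+1,2)`, and the complement of a set `S`
has `m - |S|` elements), hence by the whole convex hull. Conversely, the hull of finitely many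
points is closed, so by Hahn–Banach it suffices that every linear functional `x ↦ ∑ ℓ i * x i`
is at least as large at some permutation vector as at `y`. Take the vector that ranks the
coordinates in increasing order of `ℓ`: along this order the constraints say that the partial
sums of `y` dominate `1 + ⋯ + k`, with equality for `k = m`, and Abel summation against the
increasing weights `ℓ` gives the inequality.
-/

open Finset

theorem Set.Finite.mem_convexHull_iff_forall_exists_le {E : Type*} [AddCommGroup E] [Module ℝ E]
    [TopologicalSpace E] [IsTopologicalAddGroup E] [ContinuousSMul ℝ E]
    [LocallyConvexSpace ℝ E] [T2Space E] {s : Set E} (hs : s.Finite) {x : E} :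
    x ∈ convexHull ℝ s ↔ ∀ f : StrongDual ℝ E, ∃ v ∈ s, f x ≤ f v := by
  refine ⟨fun hx f => ((f : E →ₗ[ℝ] ℝ).convexOn convex_univ).exists_ge_of_mem_convexHull
    (Set.subset_univ s) hx, fun h => ?_⟩
  by_contra hx
  obtain ⟨f, u, hlt, hgt⟩ :=
    geometric_hahn_banach_closed_point (convex_convexHull ℝ s)
      (hs.isClosed_convexHull (𝕜 := ℝ)) hx
  obtain ⟨v, hv, hle⟩ := h f
  exact ((hle.trans_lt (hlt v (subset_convexHull ℝ s hv))).trans hgt).false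

-- Abel summation; the free bound `c` is what lets the induction on the largest index go through.
theorem sum_mul_le_mul_sum_of_prefix_sum_nonneg {ι : Type*} [LinearOrder ι] (s : Finset ι)
    {a d : ι → ℝ} (ha : MonotoneOn a s) (hd : ∀ t ∈ s, 0 ≤ ∑ k ∈ s with k ≤ t, d k)
    {c : ℝ} (hc : ∀ k ∈ s, a k ≤ c) : ∑ k ∈ s, a k * d k ≤ c * ∑ k ∈ s, d k := by
  classical
  induction s using Finset.induction_on_max generalizing c with
  | empty => simp
  | insert b s hlt ih =>
    have hb : b ∉ s := fun h => (hlt b h).false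
    have hbs := mem_insert_self b s
    have hs : ∑ k ∈ s, a k * d k ≤ a b * ∑ k ∈ s, d k := by
      refine ih (ha.mono (subset_insert b s)) (fun t ht => ?_)
        (fun k hk => ha (mem_insert_of_mem hk) hbs (hlt k hk).le)
      have := hd t (mem_insert_of_mem ht)
      rwa [filter_insert, if_neg (hlt t ht).not_ge] at this
    have htot : 0 ≤ ∑ k ∈ insert b s, d k := by
      have := hd b hbs
      rwa [filter_insert, if_pos le_rfl, filter_true_of_mem fun k hk => (hlt k hk).le] at this
    rw [sum_insert hb, sum_insert hb] at *
    calc a b * d b + ∑ k ∈ s, a k * d k ≤ a b * (d b + ∑ k ∈ s, d k) := by linarith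
      _ ≤ c * (d b + ∑ k ∈ s, d k) := mul_le_mul_of_nonneg_right (hc b hbs) htot

theorem sum_mul_nonpos_of_prefix_sum_nonneg {ι : Type*} [LinearOrder ι] (s : Finset ι)
    {a d : ι → ℝ} (ha : MonotoneOn a s) (hd : ∀ t ∈ s, 0 ≤ ∑ k ∈ s with k ≤ t, d k)
    (hsum : ∑ k ∈ s, d k = 0) : ∑ k ∈ s, a k * d k ≤ 0 := by
  obtain ⟨c, hc⟩ := (s.image a).bddAbove
  simpa [hsum] using
    sum_mul_le_mul_sum_of_prefix_sum_nonneg s ha hd fun k hk => hc (mem_image_of_mem a hk)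

theorem Finset.sum_range_add_one_eq_choose (n : ℕ) :
    ∑ k ∈ range n, (k + 1) = (n + 1).choose 2 := by
  induction n with
  | zero => simp
  | succ n ih => rw [sum_range_succ, ih, Nat.choose_succ_succ' (n + 1), Nat.choose_one_right]; ring

theorem Finset.choose_card_add_one_le_sum_add_one (T : Finset ℕ) :
    (#T + 1).choose 2 ≤ ∑ n ∈ T, (n + 1) := by
  induction T using Finset.induction_on_max with
  | empty => simp
  | insert a T hlt ih =>
    have hcard : #T ≤ a := by
      simpa using card_le_card fun n hn => mem_range.2 (hlt n hn)
    rw [card_insert_of_notMem fun h => (hlt a h).false, sum_insert fun h => (hlt a h).false,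
      Nat.choose_succ_succ' (#T + 1) 1, Nat.choose_one_right]
    simp only [Nat.reduceAdd]
    omega

namespace Fin

theorem sum_val_add_one (m : ℕ) : ∑ i : Fin m, ((i : ℝ) + 1) = (m + 1).choose 2 := by
  rw [Fin.sum_univ_eq_sum_range (fun k => (k : ℝ) + 1), ← sum_range_add_one_eq_choose]
  push_cast; rfl

theorem sum_Iic_val_add_one {m : ℕ} (t : Fin m) :
    ∑ i ∈ Iic t, ((i : ℝ) + 1) = (#(Iic t) + 1).choose 2 := by
  rw [card_Iic, ← sum_range_add_one_eq_choose, Nat.range_succ_eq_Iic, ← map_valEmbedding_Iic,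
    sum_map]
  push_cast; rfl

theorem choose_card_add_one_le_sum_val_add_one {m : ℕ} (T : Finset (Fin m)) :
    ((#T + 1).choose 2 : ℝ) ≤ ∑ i ∈ T, ((i : ℝ) + 1) := by
  have := choose_card_add_one_le_sum_add_one (T.map valEmbedding)
  rw [card_map, sum_map] at this
  exact_mod_cast this

end Fin

theorem Equiv.Perm.sum_val_add_one {m : ℕ} (π : Equiv.Perm (Fin m)) :
    ∑ i, ((π i : ℝ) + 1) = (m + 1).choose 2 := by
  rw [Equiv.sum_comp π fun i => (i : ℝ) + 1, Fin.sum_val_add_one]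

theorem Equiv.Perm.choose_card_add_one_le_sum_val_add_one {m : ℕ} (π : Equiv.Perm (Fin m))
    (T : Finset (Fin m)) : ((#T + 1).choose 2 : ℝ) ≤ ∑ i ∈ T, ((π i : ℝ) + 1) := by
  simpa using Fin.choose_card_add_one_le_sum_val_add_one (T.map π.toEmbedding)

theorem sum_le_choose_sub_iff_choose_le_sum_compl {m : ℕ} {x : Fin m → ℝ}
    (hx : ∑ i, x i = (m + 1).choose 2) (S : Finset (Fin m)) :
    ∑ i ∈ S, x i ≤ ((m + 1).choose 2 : ℝ) - ((m + 1 - #S).choose 2 : ℝ) ↔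
      ((#Sᶜ + 1).choose 2 : ℝ) ≤ ∑ i ∈ Sᶜ, x i := by
  have hcard : m + 1 - #S = #Sᶜ + 1 := by
    have := card_le_univ S
    rw [card_compl, Fintype.card_fin] at *
    omega
  rw [hcard, ← hx, ← sum_add_sum_compl S x]
  constructor <;> intro h <;> linarith

theorem Equiv.Perm.sum_val_add_one_le {m : ℕ} (π : Equiv.Perm (Fin m)) (S : Finset (Fin m)) :
    ∑ i ∈ S, ((π i : ℝ) + 1) ≤ ((m + 1).choose 2 : ℝ) - ((m + 1 - #S).choose 2 : ℝ) :=
  (sum_le_choose_sub_iff_choose_le_sum_compl π.sum_val_add_one S).2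
    (π.choose_card_add_one_le_sum_val_add_one Sᶜ)

theorem choose_card_add_one_le_sum_of_sum_le {m : ℕ} {y : Fin m → ℝ}
    (hsum : ∑ i, y i = (m + 1).choose 2)
    (hS : ∀ S : Finset (Fin m), S.Nonempty →
      ∑ i ∈ S, y i ≤ ((m + 1).choose 2 : ℝ) - ((m + 1 - #S).choose 2 : ℝ))
    (T : Finset (Fin m)) : ((#T + 1).choose 2 : ℝ) ≤ ∑ i ∈ T, y i := by
  rcases Tᶜ.eq_empty_or_nonempty with hT | hT
  · rw [(compl_eq_empty_iff T).1 hT, card_univ, Fintype.card_fin, hsum]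
  · simpa using (sum_le_choose_sub_iff_choose_le_sum_compl hsum Tᶜ).1 (hS Tᶜ hT)

theorem exists_perm_apply_le {m : ℕ} {y : Fin m → ℝ} (hsum : ∑ i, y i = (m + 1).choose 2)
    (hy : ∀ T : Finset (Fin m), ((#T + 1).choose 2 : ℝ) ≤ ∑ i ∈ T, y i)
    (f : (Fin m → ℝ) →ₗ[ℝ] ℝ) : ∃ π : Equiv.Perm (Fin m), f y ≤ f fun i => (π i : ℝ) + 1 := by
  set ℓ : Fin m → ℝ := fun i => f fun j => if i = j then 1 else 0
  set σ := Tuple.sort ℓ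
  refine ⟨σ.symm, ?_⟩
  have hf : ∀ x, f x = ∑ k, ℓ (σ k) * x (σ k) := fun x => by
    rw [f.pi_apply_eq_sum_univ, ← Equiv.sum_comp σ]
    simp only [smul_eq_mul, mul_comm, ℓ]
  rw [hf, hf, ← sub_nonpos, ← sum_sub_distrib]
  simp only [Equiv.symm_apply_apply, ← mul_sub]
  apply sum_mul_nonpos_of_prefix_sum_nonneg _ ((Tuple.monotone_sort ℓ).monotoneOn _)
  · intro t _
    rw [filter_ge_eq_Iic, sum_sub_distrib, sub_nonneg, Fin.sum_Iic_val_add_one]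
    simpa using hy ((Iic t).map σ.toEmbedding)
  · rw [sum_sub_distrib, Equiv.sum_comp σ y, hsum, Fin.sum_val_add_one, sub_self]

theorem permutahedron_description_general (m : ℕ) (y : Fin m → ℝ) :
    y ∈ convexHull ℝ
        {v : Fin m → ℝ | ∃ π : Equiv.Perm (Fin m), v = fun i => (π i : ℝ) + 1} ↔
      (∑ i, y i = (Nat.choose (m + 1) 2 : ℝ)) ∧
        ∀ S : Finset (Fin m), S.Nonempty →
          ∑ i ∈ S, y i ≤
            (Nat.choose (m + 1) 2 : ℝ) - (Nat.choose (m + 1 - S.card) 2 : ℝ) := by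
  have hfin : {v : Fin m → ℝ | ∃ π : Equiv.Perm (Fin m), v = fun i => (π i : ℝ) + 1}.Finite :=
    (Set.finite_range fun π : Equiv.Perm (Fin m) => fun i => (π i : ℝ) + 1).subset
      fun _ ⟨π, hπ⟩ => ⟨π, hπ.symm⟩
  rw [hfin.mem_convexHull_iff_forall_exists_le]
  constructor
  · intro h
    have hle : ∀ S : Finset (Fin m),
        ∑ i ∈ S, y i ≤ ((m + 1).choose 2 : ℝ) - ((m + 1 - #S).choose 2 : ℝ) := fun S => by
      obtain ⟨_, ⟨π, rfl⟩, hπ⟩ := h (∑ i ∈ S, ContinuousLinearMap.proj i)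
      simp only [_root_.sum_apply, ContinuousLinearMap.proj_apply] at hπ
      exact hπ.trans (π.sum_val_add_one_le S)
    have hge : ((m + 1).choose 2 : ℝ) ≤ ∑ i, y i := by
      obtain ⟨_, ⟨π, rfl⟩, hπ⟩ := h (-∑ i, ContinuousLinearMap.proj i)
      simpa [π.sum_val_add_one] using hπ
    have hle_univ : ∑ i, y i ≤ ((m + 1).choose 2 : ℝ) := by simpa using hle univ
    exact ⟨hle_univ.antisymm hge, fun S _ => hle S⟩
  · rintro ⟨hsum, hS⟩ f
    obtain ⟨π, hπ⟩ :=
      exists_perm_apply_le hsum (choose_card_add_one_le_sum_of_sum_le hsum hS) f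
    exact ⟨_, ⟨π, rfl⟩, hπ⟩

/-- Rado's theorem: a vector `y ∈ [1, m]^m` lies in the permutahedron (the convex
hull of the permutation vectors `i ↦ π(i)`, here `i ↦ (π i : ℝ) + 1`) if and only
if `∑ y_i = C(m+1,2)` and `∑_{i ∈ S} y_i ≤ C(m+1,2) − C(m+1−|S|,2)` for every
nonempty `S ⊆ [m]`. -/
theorem permutahedron_description (m : ℕ) (hm : 0 < m) (y : Fin m → ℝ)
    (hy : ∀ i, 1 ≤ y i ∧ y i ≤ m) :
    y ∈ convexHull ℝ
        {v : Fin m → ℝ | ∃ π : Equiv.Perm (Fin m), v = fun i => (π i : ℝ) + 1} ↔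
      (∑ i, y i = (Nat.choose (m + 1) 2 : ℝ)) ∧
        ∀ S : Finset (Fin m), S.Nonempty →
          ∑ i ∈ S, y i ≤
            (Nat.choose (m + 1) 2 : ℝ) - (Nat.choose (m + 1 - S.card) 2 : ℝ) :=
  permutahedron_description_general m y
end

section
/- Let y = (π(1), ..., π(m)) be a permutation vector. Then vectors h^0, h^1, ..., h^m ∈ [0,1]^m satisfy: (i) h^0_i = 0 for all i; (ii) h^j_i ≤ h^{j+1}_i for all j ∈ [m−1] and all i; (iii) Σ_i h^j_i = j for all j ∈ [m]; and (iv) Σ_{k=1}^{j} h^k_i ≥ j − y_i + 1 for all j, i ∈ [m]; if and only if for each j ∈ [m], h^j is the characteristic vector of H^j(π) = {i : π(i) ≤ j}. -/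
/-! Induction on `j`. If `h^1, …, h^{j-1}` are already the characteristic vectors, then
`∑_{k<j} h^k_i = j - 1 - π(i)` whenever `π(i) < j`, so (iv) and `h^j_i ≤ 1` force `h^j_i = 1`
on the `j` coordinates with `π(i) < j`. By (iii) these already exhaust the total mass `j`, and
nonnegativity forces the remaining coordinates to vanish. -/

open Finset

lemma card_filter_perm_val_lt {m : ℕ} (π : Equiv.Perm (Fin m)) {j : ℕ} (hj : j ≤ m) :
    #{i | (π i : ℕ) < j} = j := by
  rw [card_equiv π (t := {v : Fin m | (v : ℕ) < j}) (by simp), Fin.card_filter_val_lt,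
    min_eq_right hj]

lemma sum_Icc_one_ite_lt (a j : ℕ) :
    ∑ k ∈ Icc 1 j, (if a < k then (1 : ℝ) else 0) = ((j - a : ℕ) : ℝ) := by
  rw [sum_boole, show {k ∈ Icc 1 j | a < k} = Icc (a + 1) j by ext k; simp; omega,
    Nat.card_Icc, Nat.add_sub_add_right]

lemma eq_ite_mem_of_sum_eq_card {ι R : Type*} [Fintype ι] [DecidableEq ι] [Semiring R]
    [PartialOrder R] [IsOrderedCancelAddMonoid R] {x : ι → R} {s : Finset ι}
    (hx : ∀ i, 0 ≤ x i) (hs : ∀ i ∈ s, x i = 1) (hsum : ∑ i, x i = #s) (i : ι) :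
    x i = if i ∈ s then 1 else 0 := by
  split_ifs with hi
  · exact hs i hi
  have hs_sum : ∑ i ∈ s, x i = #s := by simp [sum_congr rfl hs]
  have hcompl : ∑ i ∈ sᶜ, x i = 0 := by
    rw [← sum_add_sum_compl s x, hs_sum] at hsum
    exact add_eq_left.1 hsum
  exact (sum_eq_zero_iff_of_nonneg fun i _ => hx i).1 hcompl i (mem_compl.2 hi)

lemma eq_ite_lt_of_constraints {m : ℕ} (π : Equiv.Perm (Fin m)) (h : ℕ → Fin m → ℝ)
    (hbound : ∀ j ≤ m, ∀ i, 0 ≤ h j i ∧ h j i ≤ 1) (h0 : ∀ i, h 0 i = 0)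
    (hsum : ∀ j, 1 ≤ j → j ≤ m → ∑ i, h j i = (j : ℝ))
    (hcum : ∀ j, 1 ≤ j → j ≤ m → ∀ i : Fin m,
      ∑ k ∈ Icc 1 j, h k i ≥ (j : ℝ) - ((π i : ℝ) + 1) + 1) :
    ∀ j ≤ m, ∀ i : Fin m, h j i = if (π i : ℕ) < j then 1 else 0 := by
  intro j
  induction j using Nat.strong_induction_on with
  | _ j IH =>
    intro hjm
    cases j with
    | zero => simpa using h0
    | succ n =>
      have hprev (i : Fin m) : ∑ k ∈ Icc 1 n, h k i = ((n - (π i : ℕ) : ℕ) : ℝ) := by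
        rw [← sum_Icc_one_ite_lt]
        exact sum_congr rfl fun k hk => IH k (by grind) (by grind) i
      have hone (i : Fin m) (hi : (π i : ℕ) < n + 1) : h (n + 1) i = 1 := by
        have hi_sum := hcum (n + 1) (by omega) hjm i
        rw [sum_Icc_succ_top (by omega), hprev, Nat.cast_sub (by omega)] at hi_sum
        push_cast at hi_sum
        linarith [(hbound (n + 1) hjm i).2]
      intro i
      simpa using eq_ite_mem_of_sum_eq_card (s := {i | (π i : ℕ) < n + 1})
        (fun i => (hbound (n + 1) hjm i).1) (by simpa using hone)
        (by rw [hsum (n + 1) (by omega) hjm, card_filter_perm_val_lt π hjm]) i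

theorem transformation_characterization_general (m : ℕ)
    (π : Equiv.Perm (Fin m)) (h : ℕ → Fin m → ℝ)
    (hbound : ∀ j ≤ m, ∀ i, 0 ≤ h j i ∧ h j i ≤ 1) :
    ((∀ i, h 0 i = 0) ∧
     (∀ j, 1 ≤ j → j ≤ m - 1 → ∀ i, h j i ≤ h (j + 1) i) ∧
     (∀ j, 1 ≤ j → j ≤ m → ∑ i, h j i = (j : ℝ)) ∧
     (∀ j, 1 ≤ j → j ≤ m → ∀ i : Fin m,
        ∑ k ∈ Finset.Icc 1 j, h k i ≥ (j : ℝ) - ((π i : ℝ) + 1) + 1)) ↔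
    (∀ j ≤ m, ∀ i : Fin m, h j i = if (π i : ℕ) < j then 1 else 0) := by
  refine ⟨fun ⟨h0, _, hsum, hcum⟩ => eq_ite_lt_of_constraints π h hbound h0 hsum hcum,
    fun H => ⟨fun i => by simpa using H 0 (Nat.zero_le m) i, ?_, ?_, ?_⟩⟩
  · intro j _ hj i
    rw [H j (by omega), H (j + 1) (by omega)]
    split_ifs <;> first | rfl | omega | norm_num
  · intro j _ hj
    rw [sum_congr rfl fun i _ => H j hj i, sum_boole, card_filter_perm_val_lt π hj]
  · intro j _ hj i
    rw [sum_congr rfl fun k hk => H k ((mem_Icc.1 hk).2.trans hj) i, sum_Icc_one_ite_lt]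
    have htrunc : (j : ℝ) - (π i : ℕ) ≤ ((j - (π i : ℕ) : ℕ) : ℝ) :=
      sub_le_iff_le_add.2 (by exact_mod_cast le_tsub_add)
    linarith

/-- Characterization of the transformation `Z`: for a permutation vector
`y_i = π(i)` (here `(π i : ℕ) + 1 ∈ {1, …, m}`), vectors `h^0, …, h^m ∈ [0,1]^m`
satisfy (i) `h^0 = 0`, (ii) `h^j ≤ h^{j+1}` for `j ∈ [m−1]`, (iii) `∑_i h^j_i = j`
for `j ∈ [m]`, (iv) `∑_{k=1}^j h^k_i ≥ j − y_i + 1` for `j, i ∈ [m]`, if and only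
if each `h^j` (for `j ∈ {0, …, m}`) is the characteristic vector of
`H^j(π) = {i : π(i) ≤ j}`. -/
theorem transformation_characterization (m : ℕ) (hm : 0 < m)
    (π : Equiv.Perm (Fin m)) (h : ℕ → Fin m → ℝ)
    (hbound : ∀ j ≤ m, ∀ i, 0 ≤ h j i ∧ h j i ≤ 1) :
    ((∀ i, h 0 i = 0) ∧
     (∀ j, 1 ≤ j → j ≤ m - 1 → ∀ i, h j i ≤ h (j + 1) i) ∧
     (∀ j, 1 ≤ j → j ≤ m → ∑ i, h j i = (j : ℝ)) ∧
     (∀ j, 1 ≤ j → j ≤ m → ∀ i : Fin m,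
        ∑ k ∈ Finset.Icc 1 j, h k i ≥ (j : ℝ) - ((π i : ℝ) + 1) + 1)) ↔
    (∀ j ≤ m, ∀ i : Fin m, h j i = if (π i : ℕ) < j then 1 else 0) :=
  transformation_characterization_general m π h hbound
end

section
/- In the direction (⇒) of the transformation characterization: if vectors h^0, ..., h^m ∈ [0,1]^m satisfy h^0 = 0, h^j_i ≤ h^{j+1}_i for all j and i, Σ_i h^j_i = j for all j ∈ [m], and Σ_{k=1}^{j} h^k_i ≥ j − π(i) + 1 for all j, i ∈ [m], then for each j ∈ [m], h^j_i = 1 if π(i) ≤ j and h^j_i = 0 otherwise. -/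
/-!
Let `g k i := [π i < k]` be the claimed solution. Its partial sums `T_j i = ∑_{k ≤ j} g k i`
equal `(j - π i)⁺`, so the hypotheses say that the partial sums `S_j i = ∑_{k ≤ j} h k i`
dominate `T_j i` pointwise, while both families have total `∑_{k ≤ j} k`. Hence `S_j = T_j`
for every `j`, and taking differences of consecutive partial sums gives `h = g`.
-/

open Finset

lemma sum_Icc_eq_of_le_of_sum_eq {ι : Type*} [Fintype ι] {f g : ℕ → ι → ℝ} {j : ℕ}
    (hrow : ∀ k ∈ Icc 1 j, ∑ i, f k i = ∑ i, g k i)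
    (hle : ∀ i, ∑ k ∈ Icc 1 j, g k i ≤ ∑ k ∈ Icc 1 j, f k i) (i : ι) :
    ∑ k ∈ Icc 1 j, f k i = ∑ k ∈ Icc 1 j, g k i := by
  have htotal : ∑ i, ∑ k ∈ Icc 1 j, g k i = ∑ i, ∑ k ∈ Icc 1 j, f k i := by
    rw [sum_comm, sum_comm (s := univ)]
    exact (sum_congr rfl hrow).symm
  exact ((sum_eq_sum_iff_of_le fun i _ => hle i).mp htotal i (mem_univ i)).symm

lemma eq_of_sum_Icc_eq {M : Type*} [AddCommGroup M] {f g : ℕ → M} {m : ℕ}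
    (hfg : ∀ j ≤ m, ∑ k ∈ Icc 1 j, f k = ∑ k ∈ Icc 1 j, g k) {j : ℕ} (hj : 1 ≤ j)
    (hjm : j ≤ m) : f j = g j := by
  obtain ⟨n, rfl⟩ : ∃ n, j = n + 1 := ⟨j - 1, by omega⟩
  have h := hfg (n + 1) hjm
  rwa [sum_Icc_succ_top hj, sum_Icc_succ_top hj, hfg n (by omega), add_right_inj] at h

lemma sum_Icc_ite_lt (p j : ℕ) :
    ∑ k ∈ Icc 1 j, (if p < k then (1 : ℝ) else 0) = ((j - p : ℕ) : ℝ) := by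
  have hfilter : {k ∈ Icc 1 j | p < k} = Icc (p + 1) j := by
    ext k
    simp only [mem_filter, mem_Icc]
    omega
  rw [sum_ite, sum_const_zero, add_zero, sum_const, nsmul_one, hfilter, Nat.card_Icc,
    Nat.add_sub_add_right]

lemma sum_ite_perm_lt {m : ℕ} (π : Equiv.Perm (Fin m)) {k : ℕ} (hk : k ≤ m) :
    ∑ i, (if (π i : ℕ) < k then (1 : ℝ) else 0) = k := by
  rw [Equiv.sum_comp π fun p : Fin m => if (p : ℕ) < k then (1 : ℝ) else 0, sum_ite,
    sum_const_zero, add_zero, sum_const, nsmul_one, Fin.card_filter_val_lt, min_eq_right hk]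

lemma natCast_sub_le_of_le {a b : ℕ} {x : ℝ} (hx : 0 ≤ x) (h : (a : ℝ) - b ≤ x) :
    ((a - b : ℕ) : ℝ) ≤ x := by
  rcases le_total b a with hba | hab
  · rwa [Nat.cast_sub hba]
  · rwa [Nat.sub_eq_zero_of_le hab, Nat.cast_zero]

theorem transformation_hard_direction_general (m : ℕ)
    (π : Equiv.Perm (Fin m)) (h : ℕ → Fin m → ℝ)
    (hbound : ∀ j ≤ m, ∀ i, 0 ≤ h j i ∧ h j i ≤ 1)
    (hsum : ∀ j, 1 ≤ j → j ≤ m → ∑ i, h j i = (j : ℝ))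
    (hineq : ∀ j, 1 ≤ j → j ≤ m → ∀ i : Fin m,
      ∑ k ∈ Finset.Icc 1 j, h k i ≥ (j : ℝ) - ((π i : ℝ) + 1) + 1) :
    ∀ j, 1 ≤ j → j ≤ m → ∀ i : Fin m,
      h j i = if (π i : ℕ) < j then 1 else 0 := by
  have hpartial : ∀ j ≤ m, ∀ i, ∑ k ∈ Icc 1 j, h k i =
      ∑ k ∈ Icc 1 j, (if (π i : ℕ) < k then (1 : ℝ) else 0) := by
    intro j hjm
    apply sum_Icc_eq_of_le_of_sum_eq
    · intro k hk
      obtain ⟨hk1, hkj⟩ := mem_Icc.mp hk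
      rw [hsum k hk1 (hkj.trans hjm), sum_ite_perm_lt π (hkj.trans hjm)]
    · intro i
      rw [sum_Icc_ite_lt]
      rcases Nat.eq_zero_or_pos j with rfl | hj1
      · simp
      · refine natCast_sub_le_of_le (sum_nonneg fun k hk => ?_) ?_
        · exact (hbound k ((mem_Icc.mp hk).2.trans hjm) i).1
        · linarith [hineq j hj1 hjm i]
  intro j hj1 hjm i
  exact eq_of_sum_Icc_eq (f := (h · i)) (fun j hjm => hpartial j hjm i) hj1 hjm

/-- Direction (⇒) of the transformation characterization: if
`h^0, …, h^m ∈ [0,1]^m` satisfy `h^0 = 0`, `h^j ≤ h^{j+1}`, `∑_i h^j_i = j` for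
`j ∈ [m]`, and `∑_{k=1}^j h^k_i ≥ j − π(i) + 1` for all `j, i ∈ [m]` (with
`π(i) = (π i : ℕ) + 1`), then each `h^j` is the characteristic vector of
`{i : π(i) ≤ j}`. -/
theorem transformation_hard_direction (m : ℕ) (hm : 0 < m)
    (π : Equiv.Perm (Fin m)) (h : ℕ → Fin m → ℝ)
    (hbound : ∀ j ≤ m, ∀ i, 0 ≤ h j i ∧ h j i ≤ 1)
    (h0 : ∀ i, h 0 i = 0)
    (hmono : ∀ j, ∀ i, h j i ≤ h (j + 1) i)
    (hsum : ∀ j, 1 ≤ j → j ≤ m → ∑ i, h j i = (j : ℝ))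
    (hineq : ∀ j, 1 ≤ j → j ≤ m → ∀ i : Fin m,
      ∑ k ∈ Finset.Icc 1 j, h k i ≥ (j : ℝ) - ((π i : ℝ) + 1) + 1) :
    ∀ j, 1 ≤ j → j ≤ m → ∀ i : Fin m,
      h j i = if (π i : ℕ) < j then 1 else 0 :=
  transformation_hard_direction_general m π h hbound hsum hineq
end

section
/- Suppose f : 2^[m] → ℝ is monotone (f(S) ≤ f(T) whenever S ⊆ T), submodular, and f(∅) = 0. Let the greedy ordering π_ALG be built by repeatedly adding the element with maximum marginal gain, i.e., ALG^{j+1} = ALG^j ∪ {argmax_{e ∉ ALG^j} f(ALG^j ∪ {e})}. Then f([m]) · (1 − (1 − 1/m)^j) ≤ f(ALG^j) for every j ∈ [m]. -/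
/-! Submodularity bounds the gap `f univ - f S` by the sum of the marginal gains of the elements
outside `S`, hence by `n` times the largest one, which the greedy step realises (`n = |univ|`).
So each greedy step shrinks the gap `f univ - f (ALG^j)` by the factor `1 - 1/n`, and after `j`
steps it is at most `(1 - 1/n)^j f univ`. -/

open Finset

section Greedy

variable {α : Type*} [DecidableEq α] {f : Finset α → ℝ}

theorem le_add_sum_marginal_of_submodular
    (hsub : ∀ S T, f S + f T ≥ f (S ∪ T) + f (S ∩ T)) (S T : Finset α) :
    f (S ∪ T) ≤ f S + ∑ e ∈ T \ S, (f (insert e S) - f S) := by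
  induction T using Finset.induction_on with
  | empty => simp
  | @insert a T haT ih =>
    by_cases haS : a ∈ S
    · rwa [union_insert, insert_eq_of_mem (mem_union_left T haS), insert_sdiff_of_mem T haS]
    · have hcup : (S ∪ T) ∪ insert a S = insert a (S ∪ T) := by grind
      have hcap : (S ∪ T) ∩ insert a S = S := by grind
      have hstep := hsub (S ∪ T) (insert a S)
      rw [hcup, hcap] at hstep
      rw [union_insert, insert_sdiff_of_notMem T haS,
        sum_insert fun h => haT (mem_sdiff.1 h).1]
      linarith

theorem sub_le_card_mul_greedy_gain [Fintype α] (hmono : ∀ S T, S ⊆ T → f S ≤ f T)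
    (hsub : ∀ S T, f S + f T ≥ f (S ∪ T) + f (S ∩ T)) {S : Finset α} {e : α}
    (hmax : ∀ e' ∉ S, f (insert e' S) ≤ f (insert e S)) :
    f univ - f S ≤ Fintype.card α * (f (insert e S) - f S) := by
  have hgain : 0 ≤ f (insert e S) - f S := sub_nonneg.2 (hmono _ _ (subset_insert e S))
  calc f univ - f S ≤ ∑ e' ∈ univ \ S, (f (insert e' S) - f S) := by
        have h := le_add_sum_marginal_of_submodular hsub S univ
        rw [union_eq_right.2 (subset_univ S)] at h
        linarith
    _ ≤ ∑ _e' ∈ univ \ S, (f (insert e S) - f S) :=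
        sum_le_sum fun e' he' => sub_le_sub_right (hmax e' (mem_sdiff.1 he').2) _
    _ = #(univ \ S) * (f (insert e S) - f S) := by rw [sum_const, nsmul_eq_mul]
    _ ≤ Fintype.card α * (f (insert e S) - f S) := by
        gcongr
        exact card_le_univ _

theorem greedy_gap_contracts [Fintype α] (hmono : ∀ S T, S ⊆ T → f S ≤ f T)
    (hsub : ∀ S T, f S + f T ≥ f (S ∪ T) + f (S ∩ T)) (hn : 0 < Fintype.card α)
    {S : Finset α} {e : α} (hmax : ∀ e' ∉ S, f (insert e' S) ≤ f (insert e S)) :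
    f univ - f (insert e S) ≤ (1 - 1 / Fintype.card α) * (f univ - f S) := by
  have hn' : (0 : ℝ) < Fintype.card α := by exact_mod_cast hn
  have h := sub_le_card_mul_greedy_gain hmono hsub hmax
  have hdiv : (f univ - f S) / Fintype.card α ≤ f (insert e S) - f S := by
    rw [div_le_iff₀ hn']; linarith
  calc f univ - f (insert e S) ≤ (f univ - f S) - (f univ - f S) / Fintype.card α := by linarith
    _ = (1 - 1 / Fintype.card α) * (f univ - f S) := by ring

theorem greedy_gap_le [Fintype α] (hmono : ∀ S T, S ⊆ T → f S ≤ f T)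
    (hsub : ∀ S T, f S + f T ≥ f (S ∪ T) + f (S ∩ T)) (hempty : f ∅ = 0)
    {A : ℕ → Finset α} (hA0 : A 0 = ∅)
    (hgreedy : ∀ j < Fintype.card α, ∃ e, A (j + 1) = insert e (A j) ∧
      ∀ e' ∉ A j, f (insert e' (A j)) ≤ f (insert e (A j))) :
    ∀ j ≤ Fintype.card α, f univ - f (A j) ≤ (1 - 1 / Fintype.card α) ^ j * f univ := by
  intro j
  induction j with
  | zero => simp [hA0, hempty]
  | succ j ih =>
    intro hj
    replace hj : j < Fintype.card α := hj
    obtain ⟨e, hA, hmax⟩ := hgreedy j hj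
    have hratio : (0 : ℝ) ≤ 1 - 1 / Fintype.card α := by
      rw [sub_nonneg]; exact div_le_one_of_le₀ (Nat.one_le_cast.2 (by omega)) (Nat.cast_nonneg _)
    calc f univ - f (A (j + 1)) ≤ (1 - 1 / Fintype.card α) * (f univ - f (A j)) := by
          rw [hA]; exact greedy_gap_contracts hmono hsub (j.zero_le.trans_lt hj) hmax
      _ ≤ (1 - 1 / Fintype.card α) * ((1 - 1 / Fintype.card α) ^ j * f univ) := by
          gcongr
          exact ih hj.le
      _ = (1 - 1 / Fintype.card α) ^ (j + 1) * f univ := by ring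

end Greedy

theorem greedy_submodular_guarantee_general (m : ℕ)
    (f : Finset (Fin m) → ℝ)
    (hmono : ∀ S T, S ⊆ T → f S ≤ f T)
    (hsub : ∀ S T, f S + f T ≥ f (S ∪ T) + f (S ∩ T))
    (hempty : f ∅ = 0)
    (A : ℕ → Finset (Fin m))
    (hA0 : A 0 = ∅)
    (hgreedy : ∀ j < m, ∃ e ∉ A j, A (j + 1) = insert e (A j) ∧
      ∀ e' ∉ A j, f (insert e' (A j)) ≤ f (insert e (A j))) :
    ∀ j, 1 ≤ j → j ≤ m →
      f Finset.univ * (1 - (1 - 1 / (m : ℝ)) ^ j) ≤ f (A j) := by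
  intro j _ hjm
  have hgap := greedy_gap_le hmono hsub hempty hA0
    (fun j hj => (hgreedy j (by simpa using hj)).imp fun _ ⟨_, hstep⟩ => hstep) j
    (by simpa using hjm)
  rw [Fintype.card_fin] at hgap
  linarith

/-- Nemhauser–Wolsey–Fisher-style guarantee: if `f` is monotone, submodular and
`f(∅) = 0`, and `ALG^j` are the greedy sets (each step adds an element of
maximum marginal gain), then `f([m]) · (1 − (1 − 1/m)^j) ≤ f(ALG^j)` for every
`j ∈ [m]`. -/
theorem greedy_submodular_guarantee (m : ℕ) (hm : 0 < m)
    (f : Finset (Fin m) → ℝ)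
    (hmono : ∀ S T, S ⊆ T → f S ≤ f T)
    (hsub : ∀ S T, f S + f T ≥ f (S ∪ T) + f (S ∩ T))
    (hempty : f ∅ = 0)
    (A : ℕ → Finset (Fin m))
    (hA0 : A 0 = ∅)
    (hgreedy : ∀ j < m, ∃ e ∉ A j, A (j + 1) = insert e (A j) ∧
      ∀ e' ∉ A j, f (insert e' (A j)) ≤ f (insert e (A j))) :
    ∀ j, 1 ≤ j → j ≤ m →
      f Finset.univ * (1 - (1 - 1 / (m : ℝ)) ^ j) ≤ f (A j) :=
  greedy_submodular_guarantee_general m f hmono hsub hempty A hA0 hgreedy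
end

section
/- Suppose f : 2^[m] → ℝ≥0 is monotone submodular with f(∅) = 0. Define g(π) = Σ_{j=1}^m f(H^j(π)) for a permutation π, where H^j(π) = {i : π(i) ≤ j}. Then for the greedy ordering ALG (which on each step adds the element of maximum marginal gain), g(ALG) ≥ (Σ_{j=1}^m (1 − (1 − 1/m)^j)) / m · max_π g(π); in particular the greedy ordering is a (1/e)-approximation in the limit, since (1/m) Σ_{j=1}^m (1 − (1 − 1/m)^j) ≥ 1/e is approached from above as m → ∞. -/
/-! Submodularity bounds the gap `f univ - f S` by the sum of the marginal gains of the missing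
elements, hence by `m` times the greedy gain. So each greedy step shrinks the gap by a factor
`1 - 1/m`, giving `f (A j) ≥ (1 - (1 - 1/m)^j) f univ`, while every prefix of any ordering has value
at most `f univ`. The factor `(1/m) ∑_{j=1}^m (1 - (1 - 1/m)^j)` equals `1/m + (1 - 1/m)^(m+1)`,
which is at least `1/e` because `(1 - 1/m)^(m-1) ≥ 1/e`. -/

open Finset

section Submodular

variable {α : Type*} [DecidableEq α] (f : Finset α → ℝ)

theorem sub_le_sum_marginal (hsub : ∀ S T, f S + f T ≥ f (S ∪ T) + f (S ∩ T))
    (S T : Finset α) : f (S ∪ T) - f S ≤ ∑ e ∈ T \ S, (f (insert e S) - f S) := by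
  induction T using Finset.induction with
  | empty => simp
  | @insert a T haT ih =>
    by_cases haS : a ∈ S
    · rwa [union_insert, insert_eq_of_mem (mem_union_left T haS),
        insert_sdiff_of_mem T haS]
    · have haST : a ∉ S ∪ T := by simp [haS, haT]
      have hsub_insert : f (insert a (S ∪ T)) + f S ≤ f (insert a S) + f (S ∪ T) := by
        have h := hsub (insert a S) (S ∪ T)
        rwa [insert_union, ← union_assoc, union_self, insert_inter_of_notMem haST,
          inter_eq_left.2 subset_union_left] at h
      rw [union_insert, insert_sdiff_of_notMem T haS,
        sum_insert fun h => haT (mem_sdiff.1 h).1]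
      linarith

variable [Fintype α]

theorem sub_le_card_mul_gain_of_forall_le (hmono : ∀ S T, S ⊆ T → f S ≤ f T)
    (hsub : ∀ S T, f S + f T ≥ f (S ∪ T) + f (S ∩ T)) {S : Finset α} {e : α}
    (hmax : ∀ e' ∉ S, f (insert e' S) ≤ f (insert e S)) :
    f univ - f S ≤ Fintype.card α * (f (insert e S) - f S) := by
  have hgain : 0 ≤ f (insert e S) - f S := sub_nonneg.2 (hmono _ _ (subset_insert e S))
  calc f univ - f S = f (S ∪ univ) - f S := by rw [union_eq_right.2 (subset_univ S)]
    _ ≤ ∑ e' ∈ univ \ S, (f (insert e' S) - f S) := sub_le_sum_marginal f hsub S univ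
    _ ≤ #(univ \ S) • (f (insert e S) - f S) :=
      sum_le_card_nsmul _ _ _ fun e' he' => by
        linarith [hmax e' (mem_sdiff.1 he').2]
    _ ≤ Fintype.card α * (f (insert e S) - f S) := by
      rw [nsmul_eq_mul]
      gcongr
      exact_mod_cast card_le_univ _

theorem one_sub_pow_mul_univ_le_greedy (hmono : ∀ S T, S ⊆ T → f S ≤ f T)
    (hsub : ∀ S T, f S + f T ≥ f (S ∪ T) + f (S ∩ T)) (hempty : f ∅ = 0)
    (A : ℕ → Finset α) (hA0 : A 0 = ∅)
    (hgreedy : ∀ j < Fintype.card α, ∃ e, A (j + 1) = insert e (A j) ∧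
      ∀ e' ∉ A j, f (insert e' (A j)) ≤ f (insert e (A j)))
    {j : ℕ} (hj : j ≤ Fintype.card α) :
    (1 - (1 - 1 / (Fintype.card α : ℝ)) ^ j) * f univ ≤ f (A j) := by
  set n := Fintype.card α
  have hrate : 0 ≤ 1 - 1 / (n : ℝ) := by rw [one_div]; exact sub_nonneg.2 (Nat.cast_inv_le_one n)
  have hgap : f univ - f (A j) ≤ (1 - 1 / (n : ℝ)) ^ j * (f univ - f (A 0)) := by
    refine le_geom (u := fun k => f univ - f (A k)) hrate j fun k hk => ?_
    obtain ⟨e, hAk, hmax⟩ := hgreedy k (hk.trans_le hj)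
    have hn : (0 : ℝ) < n := by exact_mod_cast (Nat.zero_le k).trans_lt (hk.trans_le hj)
    have hstep := sub_le_card_mul_gain_of_forall_le f hmono hsub hmax
    rw [← hAk] at hstep
    have hdiv : (f univ - f (A k)) / n ≤ f (A (k + 1)) - f (A k) := (div_le_iff₀' hn).2 hstep
    rw [sub_mul, one_mul, one_div_mul_eq_div]
    linarith
  rw [hA0, hempty, sub_zero] at hgap
  linarith

end Submodular

theorem sum_Icc_one_sub_one_sub_inv_pow {m : ℕ} (hm : 0 < m) :
    ∑ j ∈ Icc 1 m, (1 - (1 - 1 / (m : ℝ)) ^ j) = 1 + m * (1 - 1 / (m : ℝ)) ^ (m + 1) := by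
  set r := 1 - 1 / (m : ℝ) with hr
  have hmr : m * r = m - 1 := by rw [hr]; field_simp
  have hgeom := geom_sum_Ico_mul r (Nat.le_add_left 1 m)
  rw [Ico_add_one_right_eq_Icc, pow_one] at hgeom
  have hsum : ∑ j ∈ Icc 1 m, r ^ j = m * (r - r ^ (m + 1)) := by
    linear_combination (-(m : ℝ)) * hgeom + (∑ j ∈ Icc 1 m, r ^ j) * hmr
  rw [sum_sub_distrib, sum_const, Nat.card_Icc, Nat.add_sub_cancel, nsmul_one, hsum]
  linear_combination -hmr

theorem exp_neg_one_le_one_sub_inv_pow (m : ℕ) :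
    Real.exp (-1) ≤ (1 - 1 / (m : ℝ)) ^ (m - 1) := by
  rcases le_or_gt m 1 with hm | hm
  · rw [Nat.sub_eq_zero_of_le hm, pow_zero, Real.exp_le_one_iff]
    norm_num
  obtain ⟨n, rfl⟩ : ∃ n, m = n + 1 := ⟨m - 1, by omega⟩
  have hn : (0 : ℝ) < n := by exact_mod_cast Nat.succ_lt_succ_iff.1 hm
  have hbase : 1 - 1 / ((n + 1 : ℕ) : ℝ) = (1 + (n : ℝ)⁻¹)⁻¹ := by
    push_cast
    field_simp
    ring
  rw [hbase, Nat.add_sub_cancel, inv_pow, Real.exp_neg]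
  exact inv_anti₀ (by positivity) Real.one_add_inv_pow_le_exp

theorem one_div_exp_one_le_sum_Icc_one_sub_one_sub_inv_pow_div {m : ℕ} (hm : 0 < m) :
    1 / Real.exp 1 ≤ (∑ j ∈ Icc 1 m, (1 - (1 - 1 / (m : ℝ)) ^ j)) / m := by
  have hm' : (0 : ℝ) < m := by exact_mod_cast hm
  have he : 2 ≤ Real.exp 1 := by linarith [Real.add_one_le_exp 1]
  have hpow : (1 - 1 / (m : ℝ)) ^ (m + 1) =
      (1 - 1 / (m : ℝ)) ^ (m - 1) * (1 - 1 / (m : ℝ)) ^ 2 := by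
    rw [← pow_add]; congr 1; omega
  rw [sum_Icc_one_sub_one_sub_inv_pow hm, add_div, mul_div_cancel_left₀ _ hm'.ne', hpow]
  set x := 1 / (m : ℝ)
  have hx : 0 < x := by positivity
  calc 1 / Real.exp 1 ≤ x + Real.exp (-1) * (1 - x) ^ 2 := by
        rw [Real.exp_neg, div_le_iff₀ (by positivity)]
        field_simp
        nlinarith
    _ ≤ x + (1 - x) ^ (m - 1) * (1 - x) ^ 2 := by
        gcongr
        exact exp_neg_one_le_one_sub_inv_pow m

theorem greedy_ordering_approximation_general (m : ℕ) (hm : 0 < m)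
    (f : Finset (Fin m) → ℝ)
    (hmono : ∀ S T, S ⊆ T → f S ≤ f T)
    (hsub : ∀ S T, f S + f T ≥ f (S ∪ T) + f (S ∩ T))
    (hempty : f ∅ = 0)
    (A : ℕ → Finset (Fin m))
    (hA0 : A 0 = ∅)
    (hgreedy : ∀ j < m, ∃ e ∉ A j, A (j + 1) = insert e (A j) ∧
      ∀ e' ∉ A j, f (insert e' (A j)) ≤ f (insert e (A j))) :
    (1 / Real.exp 1 ≤ (∑ j ∈ Finset.Icc 1 m, (1 - (1 - 1 / (m : ℝ)) ^ j)) / m) ∧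
    ∀ π : Equiv.Perm (Fin m),
      (∑ j ∈ Finset.Icc 1 m, (1 - (1 - 1 / (m : ℝ)) ^ j)) / m *
          (∑ j ∈ Finset.Icc 1 m, f (Finset.univ.filter fun i => (π i : ℕ) < j)) ≤
        ∑ j ∈ Finset.Icc 1 m, f (A j) := by
  refine ⟨one_div_exp_one_le_sum_Icc_one_sub_one_sub_inv_pow_div hm, fun π => ?_⟩
  have hgreedy' : ∀ j < Fintype.card (Fin m), ∃ e, A (j + 1) = insert e (A j) ∧
      ∀ e' ∉ A j, f (insert e' (A j)) ≤ f (insert e (A j)) := fun j hj => by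
    obtain ⟨e, -, hstep⟩ := hgreedy j (by simpa using hj)
    exact ⟨e, hstep⟩
  have hALG : ∀ j ∈ Icc 1 m, (1 - (1 - 1 / (m : ℝ)) ^ j) * f univ ≤ f (A j) := fun j hj => by
    simpa using one_sub_pow_mul_univ_le_greedy f hmono hsub hempty A hA0 hgreedy'
      (by simpa using (mem_Icc.1 hj).2)
  have hOPT : ∑ j ∈ Icc 1 m, f (univ.filter fun i => (π i : ℕ) < j) ≤ m * f univ := by
    simpa using sum_le_card_nsmul (Icc 1 m) _ _ fun j _ => hmono _ _ (subset_univ _)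
  have hfactor : 0 ≤ ∑ j ∈ Icc 1 m, (1 - (1 - 1 / (m : ℝ)) ^ j) :=
    sum_nonneg fun j _ => sub_nonneg.2 (pow_le_one₀ (by simp [Nat.cast_inv_le_one]) (by simp))
  calc _ ≤ (∑ j ∈ Icc 1 m, (1 - (1 - 1 / (m : ℝ)) ^ j)) / m * (m * f univ) := by gcongr
    _ = ∑ j ∈ Icc 1 m, (1 - (1 - 1 / (m : ℝ)) ^ j) * f univ := by
      rw [← sum_mul]; field_simp
    _ ≤ ∑ j ∈ Icc 1 m, f (A j) := sum_le_sum hALG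

/-- For `f : 2^[m] → ℝ≥0` monotone submodular with `f(∅) = 0` and
`g(π) = ∑_{j=1}^m f(H^j(π))`, the greedy ordering `ALG` satisfies
`g(ALG) ≥ ((∑_{j=1}^m (1 − (1 − 1/m)^j)) / m) · max_π g(π)`; moreover the factor
satisfies `(1/m) ∑_{j=1}^m (1 − (1 − 1/m)^j) ≥ 1/e`, so greedy is a
`1/e`-approximation. Here `H^j(π) = {i : π(i) ≤ j}` is modeled as
`{i : (π i : ℕ) < j}`, and greedy is modeled by its chain of sets `A j`. -/
theorem greedy_ordering_approximation (m : ℕ) (hm : 0 < m)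
    (f : Finset (Fin m) → ℝ)
    (hnonneg : ∀ S, 0 ≤ f S)
    (hmono : ∀ S T, S ⊆ T → f S ≤ f T)
    (hsub : ∀ S T, f S + f T ≥ f (S ∪ T) + f (S ∩ T))
    (hempty : f ∅ = 0)
    (A : ℕ → Finset (Fin m))
    (hA0 : A 0 = ∅)
    (hgreedy : ∀ j < m, ∃ e ∉ A j, A (j + 1) = insert e (A j) ∧
      ∀ e' ∉ A j, f (insert e' (A j)) ≤ f (insert e (A j))) :
    (1 / Real.exp 1 ≤ (∑ j ∈ Finset.Icc 1 m, (1 - (1 - 1 / (m : ℝ)) ^ j)) / m) ∧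
    ∀ π : Equiv.Perm (Fin m),
      (∑ j ∈ Finset.Icc 1 m, (1 - (1 - 1 / (m : ℝ)) ^ j)) / m *
          (∑ j ∈ Finset.Icc 1 m, f (Finset.univ.filter fun i => (π i : ℕ) < j)) ≤
        ∑ j ∈ Finset.Icc 1 m, f (A j) :=
  greedy_ordering_approximation_general m hm f hmono hsub hempty A hA0 hgreedy
end

section
/- The sequence a_m := (1/m) · Σ_{j=1}^m (1 − (1 − 1/m)^j) satisfies a_m > 1/e for every m ≥ 1 and a_m → 1/e as m → ∞. -/
/-!
With `q = 1 - 1/m`, the geometric sum gives the closed form `a_m = 1/m + q^(m+1)`.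
The limit is then `0 + e⁻¹ · 1`. For the lower bound, `1 + 1/n ≤ e^(1/n)` gives
`q^(m-1) ≥ e⁻¹`, so `a_m ≥ 1/m + e⁻¹ q²`, and this exceeds `e⁻¹` because
`1 - q² = (2 - 1/m)/m < 2/m` and `e > 2`.
-/

open Finset Filter Real Topology

theorem one_sub_mul_sum_Icc_pow {R : Type*} [CommRing R] (q : R) (m : ℕ) :
    (1 - q) * ∑ j ∈ Icc 1 m, q ^ j = q - q ^ (m + 1) := by
  induction m with
  | zero => simp
  | succ m ih =>
    rw [sum_Icc_succ_top (by omega), mul_add, ih]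
    ring

theorem one_div_mul_sum_Icc_one_sub_pow {m : ℕ} (hm : m ≠ 0) :
    (1 / (m : ℝ)) * ∑ j ∈ Icc 1 m, (1 - (1 - 1 / (m : ℝ)) ^ j)
      = 1 / m + (1 - 1 / (m : ℝ)) ^ (m + 1) := by
  have hgeom := one_sub_mul_sum_Icc_pow (1 - 1 / (m : ℝ)) m
  rw [sub_sub_cancel] at hgeom
  rw [sum_sub_distrib, mul_sub, hgeom, sum_const, Nat.card_Icc, add_tsub_cancel_right,
    nsmul_eq_mul, mul_one, one_div_mul_cancel (Nat.cast_ne_zero.2 hm)]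
  ring

theorem exp_neg_one_le_one_sub_inv_pow_s13 (n : ℕ) :
    exp (-1) ≤ (1 - 1 / ((n : ℝ) + 1)) ^ n := by
  rcases Nat.eq_zero_or_pos n with rfl | hn
  · simp
  have hn' : (0 : ℝ) < n := Nat.cast_pos.2 hn
  have hbase : 1 + 1 / (n : ℝ) ≤ exp (1 / n) := by
    linarith [add_one_le_exp (1 / (n : ℝ))]
  have hpow : (1 + 1 / (n : ℝ)) ^ n ≤ exp 1 := by
    calc (1 + 1 / (n : ℝ)) ^ n ≤ exp (1 / n) ^ n := pow_le_pow_left₀ (by positivity) hbase n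
      _ = exp 1 := by rw [← exp_nat_mul, mul_one_div_cancel hn'.ne']
  have hq : 1 - 1 / ((n : ℝ) + 1) = (1 + 1 / (n : ℝ))⁻¹ := by
    field_simp
    ring
  rw [hq, inv_pow, exp_neg]
  exact inv_anti₀ (by positivity) hpow

theorem exp_neg_one_lt_inv_add_one_sub_inv_pow (n : ℕ) :
    exp (-1) < 1 / ((n : ℝ) + 1) + (1 - 1 / ((n : ℝ) + 1)) ^ (n + 2) := by
  set x := 1 / ((n : ℝ) + 1)
  have hx : 0 < x := by positivity
  have hx1 : x ≤ 1 := div_le_one_of_le₀ (by linarith [n.cast_nonneg (α := ℝ)]) (by positivity)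
  have hexp : exp (-1) < 1 / 2 := by
    rw [exp_neg, one_div]
    exact inv_strictAnti₀ two_pos exp_one_gt_two
  have hpow : exp (-1) * (1 - x) ^ 2 ≤ (1 - x) ^ (n + 2) := by
    rw [pow_add]
    exact mul_le_mul_of_nonneg_right (exp_neg_one_le_one_sub_inv_pow_s13 n) (sq_nonneg _)
  -- `exp (-1) * (1 - (1 - x) ^ 2) = exp (-1) * x * (2 - x) < x`
  nlinarith [exp_pos (-1), mul_pos hx hx]

theorem tendsto_inv_add_one_sub_inv_pow :
    Tendsto (fun m : ℕ ↦ 1 / (m : ℝ) + (1 - 1 / (m : ℝ)) ^ (m + 1)) atTop (𝓝 (exp (-1))) := by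
  have hinv : Tendsto (fun m : ℕ ↦ 1 / (m : ℝ)) atTop (𝓝 0) := tendsto_one_div_atTop_nhds_zero_nat
  have hpow : Tendsto (fun m : ℕ ↦ (1 - 1 / (m : ℝ)) ^ m) atTop (𝓝 (exp (-1))) := by
    simpa only [neg_div, ← sub_eq_add_neg] using tendsto_one_add_div_pow_exp (-1)
  have hbase : Tendsto (fun m : ℕ ↦ 1 - 1 / (m : ℝ)) atTop (𝓝 1) := by
    simpa using tendsto_const_nhds.sub hinv
  simpa only [pow_succ, zero_add, mul_one] using hinv.add (hpow.mul hbase)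

/-- The sequence `a_m = (1/m) ∑_{j=1}^m (1 − (1 − 1/m)^j)` satisfies `a_m > 1/e`
for every `m ≥ 1` and `a_m → 1/e` as `m → ∞`. -/
theorem greedy_factor_tendsto (a : ℕ → ℝ)
    (ha : ∀ m, a m = (1 / (m : ℝ)) * ∑ j ∈ Finset.Icc 1 m, (1 - (1 - 1 / (m : ℝ)) ^ j)) :
    (∀ m, 1 ≤ m → 1 / Real.exp 1 < a m) ∧
      Filter.Tendsto a Filter.atTop (nhds (1 / Real.exp 1)) := by
  have ha' : ∀ m, m ≠ 0 → a m = 1 / (m : ℝ) + (1 - 1 / (m : ℝ)) ^ (m + 1) := fun m hm ↦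
    (ha m).trans (one_div_mul_sum_Icc_one_sub_pow hm)
  rw [one_div (exp 1), ← exp_neg]
  refine ⟨fun m hm ↦ ?_, ?_⟩
  · obtain ⟨n, rfl⟩ := Nat.exists_eq_add_of_le' hm
    rw [ha' _ (by omega)]
    exact_mod_cast exp_neg_one_lt_inv_add_one_sub_inv_pow n
  · refine tendsto_inv_add_one_sub_inv_pow.congr' ?_
    filter_upwards [eventually_ne_atTop 0] with m hm
    exact (ha' m hm).symm
end
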